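/- In an infinite-horizon γ-discounted zero-sum polymatrix Markov game (zero-sum NMG), if π is an ε-approximate Markov (perfect) stationary CCE, then the product π̂ of the per-state marginals of π is an (n+1)ε/(1−γ)-approximate Markov (perfect) stationary Nash equilibrium; i.e., max_s max_i max_{μ_i ∈ Δ(A_i)^{|S|}} (V_i^{μ_i, π̂_{-i}}(s) − V_i^{π̂}(s)) ≤ (n+1)ε/(1−γ). -/

import Mathlib

/-!
Replacing the correlated policy `π` by the product `π̂` of its marginals changes no deviation
payoff: for a fixed own action, player `i`'s stage payoff `r_i + γ ⟨P, U⟩` is an additively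
separable function of the other players' actions (polymatrix rewards, networked transitions), so
its expectation only sees the marginals. Hence a deviation `μ` against `π̂_{-i}` is worth at most
`V_i + ε`, and so is `V̂_k`, the value of player `k` deviating to its own marginal against `π`.
As values sum to zero under every policy, `V̂_i = -∑_{k ≠ i} V̂_k ≥ V_i - (n - 1) ε`, so the
deviation gains at most `n ε ≤ (n + 1) ε / (1 - γ)`.
-/

open Finset Function

section Bellman

variable {S α : Type*} [Fintype S] [Fintype α]

def bellman (ρ : S → α → ℝ) (P : S → α → S → ℝ) (R : S → α → ℝ) (γ : ℝ) (U : S → ℝ) :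
    S → ℝ :=
  fun s => ∑ a, ρ s a * (R s a + γ * ∑ s', P s a s' * U s')

theorem abs_sum_mul_le_of_mem_stdSimplex {ι : Type*} [Fintype ι] {w f : ι → ℝ} {M : ℝ}
    (hw : w ∈ stdSimplex ℝ ι) (hf : ∀ x, |f x| ≤ M) : |∑ x, w x * f x| ≤ M :=
  calc |∑ x, w x * f x| ≤ ∑ x, |w x * f x| := abs_sum_le_sum_abs _ _
    _ ≤ ∑ x, w x * M := sum_le_sum fun x _ => by
        rw [abs_mul, abs_of_nonneg (hw.1 x)]
        exact mul_le_mul_of_nonneg_left (hf x) (hw.1 x)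
    _ = M := by rw [← sum_mul, hw.2, one_mul]

theorem bellman_sub_bellman (ρ : S → α → ℝ) (P : S → α → S → ℝ) (R : S → α → ℝ) (γ : ℝ)
    (U U' : S → ℝ) (s : S) :
    bellman ρ P R γ U s - bellman ρ P R γ U' s =
      γ * ∑ a, ρ s a * ∑ s', P s a s' * (U s' - U' s') := by
  rw [bellman, bellman, ← sum_sub_distrib, mul_sum]
  refine sum_congr rfl fun a _ => ?_
  simp only [mul_sub, sum_sub_distrib]
  ring

variable {ρ : S → α → ℝ} {P : S → α → S → ℝ} {γ : ℝ}

theorem bellman_contractingWith (hρ : ∀ s, ρ s ∈ stdSimplex ℝ α)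
    (hP : ∀ s a, P s a ∈ stdSimplex ℝ S) (hγ0 : 0 ≤ γ) (hγ1 : γ < 1) (R : S → α → ℝ) :
    ContractingWith γ.toNNReal (bellman ρ P R γ) := by
  refine ⟨Real.toNNReal_lt_one.2 hγ1, LipschitzWith.of_dist_le_mul fun U U' => ?_⟩
  rw [Real.coe_toNNReal γ hγ0, dist_pi_le_iff (by positivity)]
  intro s
  rw [Real.dist_eq, bellman_sub_bellman, abs_mul, abs_of_nonneg hγ0]
  gcongr
  refine abs_sum_mul_le_of_mem_stdSimplex (hρ s) fun a =>
    abs_sum_mul_le_of_mem_stdSimplex (hP s a) fun s' => ?_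
  rw [← Real.dist_eq]
  exact dist_le_pi_dist U U' s'

theorem sum_bellman {ι : Type*} (t : Finset ι) (R : ι → S → α → ℝ) (Y : ι → S → ℝ) :
    ∑ k ∈ t, bellman ρ P (R k) γ (Y k) = bellman ρ P (∑ k ∈ t, R k) γ (∑ k ∈ t, Y k) := by
  funext s
  simp only [bellman, Finset.sum_apply, mul_add, sum_add_distrib, mul_sum]
  congr 1
  · exact sum_comm
  · rw [sum_comm]
    exact sum_congr rfl fun a _ => sum_comm

theorem sum_eq_zero_of_isFixedPt_bellman {ι : Type*} [Fintype ι] (hρ : ∀ s, ρ s ∈ stdSimplex ℝ α)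
    (hP : ∀ s a, P s a ∈ stdSimplex ℝ S) (hγ0 : 0 ≤ γ) (hγ1 : γ < 1) {R : ι → S → α → ℝ}
    (hR : ∀ s a, ∑ k, R k s a = 0) {Y : ι → S → ℝ}
    (hY : ∀ k, IsFixedPt (bellman ρ P (R k) γ) (Y k)) : ∑ k, Y k = 0 := by
  have hR0 : ∑ k, R k = 0 := by funext s a; simpa using hR s a
  have h0 : IsFixedPt (bellman ρ P 0 γ) 0 := by funext s; simp [bellman]
  refine (bellman_contractingWith hρ hP hγ0 hγ1 0).fixedPoint_unique' ?_ h0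
  rw [IsFixedPt, ← hR0, ← sum_bellman]
  exact sum_congr rfl fun k _ => hY k

end Bellman

section Marginal

variable {N : Type*} [Fintype N] [DecidableEq N] {A : N → Type*} [∀ k, Fintype (A k)]

theorem pi_mem_stdSimplex {f : ∀ k, A k → ℝ} (hf : ∀ k, f k ∈ stdSimplex ℝ (A k)) :
    (fun a => ∏ k, f k (a k)) ∈ stdSimplex ℝ (∀ k, A k) :=
  ⟨fun a => prod_nonneg fun k _ => (hf k).1 (a k),
    by rw [← Fintype.prod_sum]; exact prod_eq_one fun k _ => (hf k).2⟩

theorem sum_update_pi {f : ∀ k, A k → ℝ} {i : N} (hf : ∑ c, f i c = 1) (a : ∀ k, A k) :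
    ∑ b, ∏ k, f k (update a i b k) = ∏ k ∈ univ.erase i, f k (a k) := by
  have h : ∀ b, ∏ k, f k (update a i b k) = f i b * ∏ k ∈ univ.erase i, f k (a k) := by
    intro b
    rw [← mul_prod_erase _ _ (mem_univ i), update_self]
    congr 1
    exact prod_congr rfl fun k hk => by rw [update_of_ne (ne_of_mem_erase hk)]
  simp only [h, ← sum_mul, hf, one_mul]

/-- Player `i` plays `μ`, independently of the others, who follow the marginal of `ρ` on their
joint actions. -/
def deviate (ρ : (∀ k, A k) → ℝ) (i : N) (μ : A i → ℝ) (a : ∀ k, A k) : ℝ :=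
  μ (a i) * ∑ b, ρ (update a i b)

theorem sum_deviate_mul (ρ : (∀ k, A k) → ℝ) (i : N) (μ : A i → ℝ) (h : (∀ k, A k) → ℝ) :
    ∑ a, deviate ρ i μ a * h a = ∑ c, μ c * ∑ a, ρ a * h (update a i c) := by
  let e : Equiv.Perm ((∀ k, A k) × A i) := Involutive.toPerm (fun p => (update p.1 i p.2, p.1 i))
    fun p => by simp
  calc ∑ a, deviate ρ i μ a * h a
      = ∑ p : (∀ k, A k) × A i, μ (p.1 i) * ρ (update p.1 i p.2) * h p.1 := by
        simp only [deviate, Fintype.sum_prod_type, mul_sum, sum_mul]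
    _ = ∑ p : (∀ k, A k) × A i, μ p.2 * ρ p.1 * h (update p.1 i p.2) :=
        Fintype.sum_equiv e _ _ fun p => by
          change _ = μ (p.1 i) * ρ (update p.1 i p.2) * h (update (update p.1 i p.2) i (p.1 i))
          rw [update_idem, update_eq_self]
    _ = ∑ c, μ c * ∑ a, ρ a * h (update a i c) := by
        simp only [Fintype.sum_prod_type_right, mul_sum, mul_assoc]

theorem deviate_pi {f : ∀ k, A k → ℝ} {i : N} (hf : ∑ c, f i c = 1) (μ : A i → ℝ)
    (a : ∀ k, A k) :
    deviate (fun a => ∏ k, f k (a k)) i μ a = μ (a i) * ∏ k ∈ univ.erase i, f k (a k) := by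
  rw [deviate, sum_update_pi hf]

theorem deviate_pi_self {f : ∀ k, A k → ℝ} {i : N} (hf : ∑ c, f i c = 1) :
    deviate (fun a => ∏ k, f k (a k)) i (f i) = fun a => ∏ k, f k (a k) := by
  funext a
  rw [deviate_pi hf, mul_prod_erase _ (fun k => f k (a k)) (mem_univ i)]

variable [∀ k, DecidableEq (A k)]

def marginal (ρ : (∀ k, A k) → ℝ) (j : N) (c : A j) : ℝ :=
  ∑ b : ∀ k, A k, if b j = c then ρ b else 0

theorem sum_marginal_mul (ρ : (∀ k, A k) → ℝ) (j : N) (t : A j → ℝ) :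
    ∑ c, marginal ρ j c * t c = ∑ a, ρ a * t (a j) := by
  simp only [marginal, sum_mul, ite_mul, zero_mul]
  rw [sum_comm]
  simp

theorem marginal_mem_stdSimplex {ρ : (∀ k, A k) → ℝ} (hρ : ρ ∈ stdSimplex ℝ (∀ k, A k))
    (j : N) : marginal ρ j ∈ stdSimplex ℝ (A j) := by
  refine ⟨fun c => sum_nonneg fun b _ => ?_, ?_⟩
  · split_ifs
    exacts [hρ.1 b, le_rfl]
  · simpa [hρ.2] using sum_marginal_mul ρ j 1

theorem marginal_pi {f : ∀ k, A k → ℝ} (hf : ∀ k, ∑ c, f k c = 1) (j : N) :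
    marginal (fun a => ∏ k, f k (a k)) j = f j := by
  funext c
  set g := update f j fun d => if d = c then f j d else 0
  have hg : ∀ a : ∀ k, A k, (if a j = c then ∏ k, f k (a k) else 0) = ∏ k, g k (a k) := by
    intro a
    have hne : ∏ k ∈ univ.erase j, g k (a k) = ∏ k ∈ univ.erase j, f k (a k) :=
      prod_congr rfl fun k hk => by simp only [g, update_of_ne (ne_of_mem_erase hk)]
    rw [← mul_prod_erase _ _ (mem_univ j), ← mul_prod_erase _ _ (mem_univ j), hne]
    simp only [g, update_self]
    split_ifs <;> simp
  have hgj : ∑ d, g j d = f j c := by simp [g]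
  have hgk : ∀ k ∈ univ.erase j, ∑ d, g k d = 1 := fun k hk => by
    simp only [g, update_of_ne (ne_of_mem_erase hk), hf k]
  rw [marginal, sum_congr rfl fun a _ => hg a, ← Fintype.prod_sum,
    ← mul_prod_erase _ _ (mem_univ j), hgj, prod_eq_one hgk, mul_one]

def productMarginal (ρ : (∀ k, A k) → ℝ) (a : ∀ k, A k) : ℝ :=
  ∏ k, marginal ρ k (a k)

theorem productMarginal_mem_stdSimplex {ρ : (∀ k, A k) → ℝ}
    (hρ : ρ ∈ stdSimplex ℝ (∀ k, A k)) : productMarginal ρ ∈ stdSimplex ℝ (∀ k, A k) :=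
  pi_mem_stdSimplex (marginal_mem_stdSimplex hρ)

theorem marginal_productMarginal {ρ : (∀ k, A k) → ℝ} (hρ : ρ ∈ stdSimplex ℝ (∀ k, A k)) :
    marginal (productMarginal ρ) = marginal ρ :=
  funext <| marginal_pi fun k => (marginal_mem_stdSimplex hρ k).2

theorem deviate_productMarginal {ρ : (∀ k, A k) → ℝ} (hρ : ρ ∈ stdSimplex ℝ (∀ k, A k)) (i : N)
    (μ : A i → ℝ) (a : ∀ k, A k) :
    deviate (productMarginal ρ) i μ a = μ (a i) * ∏ k ∈ univ.erase i, marginal ρ k (a k) :=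
  deviate_pi (marginal_mem_stdSimplex hρ i).2 μ a

theorem deviate_productMarginal_marginal {ρ : (∀ k, A k) → ℝ}
    (hρ : ρ ∈ stdSimplex ℝ (∀ k, A k)) (i : N) :
    deviate (productMarginal ρ) i (marginal ρ i) = productMarginal ρ :=
  deviate_pi_self (marginal_mem_stdSimplex hρ i).2

end Marginal

section Separable

variable {N : Type*} [Fintype N] {A : N → Type*}

def IsAdditivelySeparable (h : (∀ k, A k) → ℝ) : Prop :=
  ∃ (κ : ℝ) (t : ∀ k, A k → ℝ), ∀ a, h a = κ + ∑ k, t k (a k)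

theorem isAdditivelySeparable_const (κ : ℝ) :
    IsAdditivelySeparable fun _ : ∀ k, A k => κ :=
  ⟨κ, 0, fun _ => by simp⟩

theorem IsAdditivelySeparable.add {h h' : (∀ k, A k) → ℝ} (hh : IsAdditivelySeparable h)
    (hh' : IsAdditivelySeparable h') : IsAdditivelySeparable fun a => h a + h' a := by
  obtain ⟨κ, t, ht⟩ := hh
  obtain ⟨κ', t', ht'⟩ := hh'
  exact ⟨κ + κ', t + t', fun a => by simp only [ht, ht', Pi.add_apply, sum_add_distrib]; ring⟩

theorem IsAdditivelySeparable.const_mul {h : (∀ k, A k) → ℝ} (hh : IsAdditivelySeparable h)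
    (c : ℝ) : IsAdditivelySeparable fun a => c * h a := by
  obtain ⟨κ, t, ht⟩ := hh
  exact ⟨c * κ, c • t, fun a => by simp only [ht, Pi.smul_apply, smul_eq_mul, mul_add, mul_sum]⟩

theorem isAdditivelySeparable_sum {ι : Type*} (s : Finset ι) {h : ι → (∀ k, A k) → ℝ}
    (hh : ∀ x ∈ s, IsAdditivelySeparable (h x)) :
    IsAdditivelySeparable fun a => ∑ x ∈ s, h x a := by
  classical
  induction s using Finset.induction_on with
  | empty => simpa using isAdditivelySeparable_const 0
  | insert x s hx ih =>
    simp only [sum_insert hx]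
    exact (hh x (mem_insert_self x s)).add (ih fun y hy => hh y (mem_insert_of_mem hy))

variable [DecidableEq N]

theorem isAdditivelySeparable_apply (j : N) (t : A j → ℝ) :
    IsAdditivelySeparable fun a : ∀ k, A k => t (a j) :=
  ⟨0, Pi.single j t, fun a => by
    rw [zero_add, sum_eq_single j (fun k _ hk => by simp [Pi.single_eq_of_ne hk]) (by simp)]
    simp⟩

theorem IsAdditivelySeparable.comp_update {h : (∀ k, A k) → ℝ} (hh : IsAdditivelySeparable h)
    (i : N) (c : A i) : IsAdditivelySeparable fun a => h (update a i c) := by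
  obtain ⟨κ, t, ht⟩ := hh
  refine ⟨κ + t i c, update t i 0, fun a => ?_⟩
  change h (update a i c) = _
  rw [ht, ← add_sum_erase _ _ (mem_univ i), ← add_sum_erase _ _ (mem_univ i), update_self,
    update_self, Pi.zero_apply, zero_add, add_assoc]
  congr 2
  exact sum_congr rfl fun k hk => by simp only [update_of_ne (ne_of_mem_erase hk)]

variable [∀ k, Fintype (A k)] [∀ k, DecidableEq (A k)]

theorem IsAdditivelySeparable.sum_mul_eq_of_marginal_eq {h : (∀ k, A k) → ℝ}
    (hh : IsAdditivelySeparable h) {ρ₁ ρ₂ : (∀ k, A k) → ℝ} (h₁ : ∑ a, ρ₁ a = 1)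
    (h₂ : ∑ a, ρ₂ a = 1) (hm : marginal ρ₁ = marginal ρ₂) :
    ∑ a, ρ₁ a * h a = ∑ a, ρ₂ a * h a := by
  obtain ⟨κ, t, ht⟩ := hh
  have hexp : ∀ ρ : (∀ k, A k) → ℝ,
      ∑ a, ρ a * h a = κ * ∑ a, ρ a + ∑ k, ∑ c, marginal ρ k c * t k c := by
    intro ρ
    simp only [ht, mul_add, sum_add_distrib, mul_sum, sum_marginal_mul]
    rw [sum_comm (s := univ (α := N))]
    simp only [mul_comm]
  rw [hexp, hexp, h₁, h₂, hm]

theorem bellman_deviate_eq_of_marginal_eq {S : Type*} [Fintype S]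
    {ρ₁ ρ₂ : S → (∀ k, A k) → ℝ} (h₁ : ∀ s, ∑ a, ρ₁ s a = 1) (h₂ : ∀ s, ∑ a, ρ₂ s a = 1)
    (hm : ∀ s, marginal (ρ₁ s) = marginal (ρ₂ s)) {i : N} {R : S → (∀ k, A k) → ℝ}
    (hR : ∀ s c, IsAdditivelySeparable fun a => R s (update a i c))
    {P : S → (∀ k, A k) → S → ℝ}
    (hP : ∀ s (U : S → ℝ), IsAdditivelySeparable fun a => ∑ s', P s a s' * U s') (γ : ℝ)
    (μ : S → A i → ℝ) :
    bellman (fun s => deviate (ρ₁ s) i (μ s)) P R γ =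
      bellman (fun s => deviate (ρ₂ s) i (μ s)) P R γ := by
  funext U s
  simp only [bellman, sum_deviate_mul]
  refine sum_congr rfl fun c _ => congrArg _ ?_
  exact ((hR s c).add (((hP s U).comp_update i c).const_mul γ)).sum_mul_eq_of_marginal_eq
    (h₁ s) (h₂ s) (hm s)

end Separable

section Polymatrix

variable {S N : Type*} [Fintype N] [DecidableEq N] {A : N → Type*}

def polymatrixReward (E : N → N → Prop) [DecidableRel E] (rp : ∀ i j, S → A i → A j → ℝ)
    (i : N) (s : S) (a : ∀ k, A k) : ℝ :=
  ∑ j ∈ univ.filter (fun j => E i j), rp i j s (a i) (a j)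

theorem isAdditivelySeparable_polymatrixReward_update {E : N → N → Prop} [DecidableRel E]
    {i : N} (hirr : ¬ E i i) (rp : ∀ i j, S → A i → A j → ℝ) (s : S) (c : A i) :
    IsAdditivelySeparable fun a => polymatrixReward E rp i s (update a i c) := by
  have h : (fun a => polymatrixReward E rp i s (update a i c)) =
      fun a => ∑ j ∈ univ.filter (fun j => E i j), rp i j s c (a j) := by
    funext a
    refine sum_congr rfl fun j hj => ?_
    have hji : j ≠ i := by rintro rfl; exact hirr (mem_filter.1 hj).2
    rw [update_self, update_of_ne hji]
  rw [h]
  exact isAdditivelySeparable_sum _ fun j _ => isAdditivelySeparable_apply j _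

theorem isAdditivelySeparable_nextValue [Fintype S] {P : S → (∀ k, A k) → S → ℝ}
    (hP : (∃ (C : Finset N) (F : ∀ i, S → A i → S → ℝ),
              ∀ s (a : ∀ i, A i) s', P s a s' = ∑ i ∈ C, F i s (a i) s') ∨
           (∃ Fo : S → S → ℝ, ∀ s (a : ∀ i, A i) s', P s a s' = Fo s s'))
    (s : S) (U : S → ℝ) : IsAdditivelySeparable fun a => ∑ s', P s a s' * U s' := by
  rcases hP with ⟨C, F, hF⟩ | ⟨Fo, hFo⟩
  · have h : (fun a => ∑ s', P s a s' * U s') =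
        fun a => ∑ k ∈ C, ∑ s', F k s (a k) s' * U s' := by
      funext a
      simp only [hF, sum_mul]
      exact sum_comm
    rw [h]
    exact isAdditivelySeparable_sum C fun k _ => isAdditivelySeparable_apply k
      fun d => ∑ s', F k s d s' * U s'
  · simpa only [hFo] using isAdditivelySeparable_const _

theorem bellman_deviate_productMarginal [Fintype S] [∀ k, Fintype (A k)]
    [∀ k, DecidableEq (A k)] {E : N → N → Prop} [DecidableRel E] {k : N} (hirr : ¬ E k k)
    (rp : ∀ i j, S → A i → A j → ℝ) {P : S → (∀ k, A k) → S → ℝ}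
    (hP : (∃ (C : Finset N) (F : ∀ i, S → A i → S → ℝ),
              ∀ s (a : ∀ i, A i) s', P s a s' = ∑ i ∈ C, F i s (a i) s') ∨
           (∃ Fo : S → S → ℝ, ∀ s (a : ∀ i, A i) s', P s a s' = Fo s s'))
    {π : S → (∀ k, A k) → ℝ} (hπ : ∀ s, π s ∈ stdSimplex ℝ (∀ k, A k)) (γ : ℝ)
    (μ : S → A k → ℝ) :
    bellman (fun s => deviate (productMarginal (π s)) k (μ s)) P (polymatrixReward E rp k) γ =
      bellman (fun s => deviate (π s) k (μ s)) P (polymatrixReward E rp k) γ :=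
  bellman_deviate_eq_of_marginal_eq (fun s => (productMarginal_mem_stdSimplex (hπ s)).2)
    (fun s => (hπ s).2) (fun s => marginal_productMarginal (hπ s))
    (isAdditivelySeparable_polymatrixReward_update hirr rp)
    (isAdditivelySeparable_nextValue hP) γ μ

end Polymatrix

theorem sub_le_card_mul_of_sum_eq_zero {ι : Type*} [Fintype ι] [DecidableEq ι] {V Z : ι → ℝ}
    {ε w : ℝ} (hV : ∑ k, V k = 0) (hZ : ∑ k, Z k = 0) (hZV : ∀ k, Z k - V k ≤ ε) (i : ι)
    (hw : w - V i ≤ ε) : w - Z i ≤ Fintype.card ι * ε := by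
  have hsum : ∑ k ∈ univ.erase i, (Z k - V k) ≤ ∑ k ∈ univ.erase i, ε :=
    sum_le_sum fun k _ => hZV k
  have hcard : ε + ∑ k ∈ univ.erase i, ε = Fintype.card ι * ε := by
    rw [add_sum_erase _ (fun _ => ε) (mem_univ i), sum_const, card_univ, nsmul_eq_mul]
  rw [← add_sum_erase _ _ (mem_univ i)] at hV hZ
  rw [sum_sub_distrib] at hsum
  linarith

theorem zeroSum_NMG_CCE_to_NE_general {S N : Type*} [Fintype S]
    [Fintype N] [DecidableEq N]
    (A : N → Type*) [∀ i, Fintype (A i)] [∀ i, DecidableEq (A i)]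
    (E : N → N → Prop) [DecidableRel E] (hirr : ∀ i, ¬ E i i)
    (rp : ∀ i j, S → A i → A j → ℝ)    -- pairwise rewards r_{i,j}(s, a_i, a_j)
    (γ ε : ℝ) (hγ0 : 0 < γ) (hγ1 : γ < 1) (hε : 0 ≤ ε)
    -- the rewards are zero-sum at every state and joint action
    (hzs : ∀ (s : S) (a : ∀ i, A i),
      ∑ i, ∑ j ∈ Finset.univ.filter (fun j => E i j), rp i j s (a i) (a j) = 0)
    (P : S → (∀ i, A i) → S → ℝ)
    (hPnn : ∀ s a s', 0 ≤ P s a s') (hPsum : ∀ s a, ∑ s', P s a s' = 1)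
    -- networked transition structure: an ensemble of single-controller kernels, or constant
    (hPdec : (∃ (C : Finset N) (F : ∀ i, S → A i → S → ℝ),
                ∀ s (a : ∀ i, A i) s', P s a s' = ∑ i ∈ C, F i s (a i) s') ∨
             (∃ Fo : S → S → ℝ, ∀ s (a : ∀ i, A i) s', P s a s' = Fo s s'))
    -- π : a stationary joint (possibly correlated) Markov policy
    (π : S → (∀ i, A i) → ℝ)
    (hπnn : ∀ s a, 0 ≤ π s a) (hπsum : ∀ s, ∑ a, π s a = 1)
    -- V i = the value function of player i under π
    (V : N → S → ℝ)
    (hV : ∀ i s, V i s = ∑ a : ∀ j, A j, π s a *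
      ((∑ j ∈ Finset.univ.filter (fun j => E i j), rp i j s (a i) (a j)) +
        γ * ∑ s', P s a s' * V i s'))
    -- π is an ε-approximate Markov perfect stationary CCE
    (hCCE : ∀ (i : N) (μ : S → A i → ℝ), (∀ s b, 0 ≤ μ s b) → (∀ s, ∑ b, μ s b = 1) →
      ∀ W : S → ℝ, (∃ M, ∀ s, |W s| ≤ M) →
        (∀ s, W s = ∑ a : ∀ j, A j,
          (μ s (a i) * ∑ b : A i, π s (Function.update a i b)) *
          ((∑ j ∈ Finset.univ.filter (fun j => E i j), rp i j s (a i) (a j)) +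
            γ * ∑ s', P s a s' * W s')) →
        ∀ s, W s - V i s ≤ ε) :
    -- conclusion: the product π̂ of the per-state marginals of π is an
    -- (n+1)ε/(1−γ)-approximate Markov perfect stationary NE
    ∀ (i : N) (μ : S → A i → ℝ), (∀ s b, 0 ≤ μ s b) → (∀ s, ∑ b, μ s b = 1) →
      ∀ Vhat W : S → ℝ, (∃ M, ∀ s, |Vhat s| ≤ M) → (∃ M, ∀ s, |W s| ≤ M) →
        -- Vhat : player i's value under π̂
        (∀ s, Vhat s = ∑ a : ∀ j, A j,
          (∏ j, (∑ b : ∀ k, A k, if b j = a j then π s b else 0)) *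
          ((∑ j ∈ Finset.univ.filter (fun j => E i j), rp i j s (a i) (a j)) +
            γ * ∑ s', P s a s' * Vhat s')) →
        -- W : player i's value when deviating to μ against π̂_{-i}
        (∀ s, W s = ∑ a : ∀ j, A j,
          (μ s (a i) * ∏ j ∈ Finset.univ.erase i,
            (∑ b : ∀ k, A k, if b j = a j then π s b else 0)) *
          ((∑ j ∈ Finset.univ.filter (fun j => E i j), rp i j s (a i) (a j)) +
            γ * ∑ s', P s a s' * W s')) →
        ∀ s, W s - Vhat s ≤ ((Fintype.card N : ℝ) + 1) * ε / (1 - γ) := by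
  intro i μ hμnn hμsum Vhat W _ _ hVhat hW s
  have hπ : ∀ s, π s ∈ stdSimplex ℝ (∀ k, A k) := fun s => ⟨hπnn s, hπsum s⟩
  have hP : ∀ s a, P s a ∈ stdSimplex ℝ S := fun s a => ⟨hPnn s a, hPsum s a⟩
  set R := polymatrixReward E rp
  set πhat := fun s => productMarginal (π s)
  have hπhat : ∀ s, πhat s ∈ stdSimplex ℝ (∀ k, A k) :=
    fun s => productMarginal_mem_stdSimplex (hπ s)
  have hdevCCE : ∀ k (μ : S → A k → ℝ), (∀ s, μ s ∈ stdSimplex ℝ (A k)) → ∀ U,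
      IsFixedPt (bellman (fun s => deviate (πhat s) k (μ s)) P (R k) γ) U →
        ∀ s, U s - V k s ≤ ε := by
    intro k μ hμ U hU
    rw [bellman_deviate_productMarginal (hirr k) rp hPdec hπ] at hU
    exact hCCE k μ (fun s => (hμ s).1) (fun s => (hμ s).2) U (Finite.exists_le _)
      fun s => (congrFun hU s).symm
  have hC : ∀ k, ContractingWith γ.toNNReal (bellman πhat P (R k) γ) :=
    fun k => bellman_contractingWith hπhat hP hγ0.le hγ1 (R k)
  set Z := fun k => (hC k).fixedPoint
  have hZ : ∀ k, IsFixedPt (bellman πhat P (R k) γ) (Z k) := fun k => (hC k).fixedPoint_isFixedPt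
  have hVhatZ : Vhat = Z i := (hC i).fixedPoint_unique' (funext fun s => (hVhat s).symm) (hZ i)
  have hWV : W s - V i s ≤ ε := hdevCCE i μ (fun s => ⟨hμnn s, hμsum s⟩) W (funext fun s => by
    simp only [bellman, πhat, deviate_productMarginal (hπ s)]
    exact (hW s).symm) s
  have hZV : ∀ k, Z k s - V k s ≤ ε := fun k => hdevCCE k _
    (fun s => marginal_mem_stdSimplex (hπ s) k) (Z k)
    (by rw [funext fun s => deviate_productMarginal_marginal (hπ s) k]; exact hZ k) s
  have hV0 := sum_eq_zero_of_isFixedPt_bellman hπ hP hγ0.le hγ1 (R := R) hzs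
    fun k => funext fun s => (hV k s).symm
  have hZ0 := sum_eq_zero_of_isFixedPt_bellman hπhat hP hγ0.le hγ1 (R := R) hzs hZ
  calc W s - Vhat s ≤ Fintype.card N * ε := by
        rw [hVhatZ]
        exact sub_le_card_mul_of_sum_eq_zero (by simpa using congrFun hV0 s)
          (by simpa using congrFun hZ0 s) hZV i hWV
    _ ≤ ((Fintype.card N : ℝ) + 1) * ε / (1 - γ) := by
        rw [le_div_iff₀ (by linarith)]
        nlinarith [mul_nonneg (Nat.cast_nonneg (Fintype.card N) : (0 : ℝ) ≤ _) hε]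

/-- In an infinite-horizon γ-discounted zero-sum Markov game with networked separable
interactions (zero-sum NMG), if π is an ε-approximate Markov perfect stationary CCE, then the
product π̂ of its per-state marginals is an `(n+1)ε/(1−γ)`-approximate Markov perfect
stationary Nash equilibrium. -/
theorem zeroSum_NMG_CCE_to_NE {S N : Type*} [Fintype S] [Nonempty S]
    [Fintype N] [DecidableEq N]
    (A : N → Type*) [∀ i, Fintype (A i)] [∀ i, Nonempty (A i)] [∀ i, DecidableEq (A i)]
    (E : N → N → Prop) [DecidableRel E] (hirr : ∀ i, ¬ E i i)
    (rp : ∀ i j, S → A i → A j → ℝ)    -- pairwise rewards r_{i,j}(s, a_i, a_j)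
    (γ ε : ℝ) (hγ0 : 0 < γ) (hγ1 : γ < 1) (hε : 0 ≤ ε)
    -- the rewards are zero-sum at every state and joint action
    (hzs : ∀ (s : S) (a : ∀ i, A i),
      ∑ i, ∑ j ∈ Finset.univ.filter (fun j => E i j), rp i j s (a i) (a j) = 0)
    (P : S → (∀ i, A i) → S → ℝ)
    (hPnn : ∀ s a s', 0 ≤ P s a s') (hPsum : ∀ s a, ∑ s', P s a s' = 1)
    -- networked transition structure: an ensemble of single-controller kernels, or constant
    (hPdec : (∃ (C : Finset N) (F : ∀ i, S → A i → S → ℝ),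
                ∀ s (a : ∀ i, A i) s', P s a s' = ∑ i ∈ C, F i s (a i) s') ∨
             (∃ Fo : S → S → ℝ, ∀ s (a : ∀ i, A i) s', P s a s' = Fo s s'))
    -- π : a stationary joint (possibly correlated) Markov policy
    (π : S → (∀ i, A i) → ℝ)
    (hπnn : ∀ s a, 0 ≤ π s a) (hπsum : ∀ s, ∑ a, π s a = 1)
    -- V i = the value function of player i under π
    (V : N → S → ℝ) (hVbdd : ∃ M, ∀ i s, |V i s| ≤ M)
    (hV : ∀ i s, V i s = ∑ a : ∀ j, A j, π s a *
      ((∑ j ∈ Finset.univ.filter (fun j => E i j), rp i j s (a i) (a j)) +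
        γ * ∑ s', P s a s' * V i s'))
    -- π is an ε-approximate Markov perfect stationary CCE
    (hCCE : ∀ (i : N) (μ : S → A i → ℝ), (∀ s b, 0 ≤ μ s b) → (∀ s, ∑ b, μ s b = 1) →
      ∀ W : S → ℝ, (∃ M, ∀ s, |W s| ≤ M) →
        (∀ s, W s = ∑ a : ∀ j, A j,
          (μ s (a i) * ∑ b : A i, π s (Function.update a i b)) *
          ((∑ j ∈ Finset.univ.filter (fun j => E i j), rp i j s (a i) (a j)) +
            γ * ∑ s', P s a s' * W s')) →
        ∀ s, W s - V i s ≤ ε) :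
    -- conclusion: the product π̂ of the per-state marginals of π is an
    -- (n+1)ε/(1−γ)-approximate Markov perfect stationary NE
    ∀ (i : N) (μ : S → A i → ℝ), (∀ s b, 0 ≤ μ s b) → (∀ s, ∑ b, μ s b = 1) →
      ∀ Vhat W : S → ℝ, (∃ M, ∀ s, |Vhat s| ≤ M) → (∃ M, ∀ s, |W s| ≤ M) →
        -- Vhat : player i's value under π̂
        (∀ s, Vhat s = ∑ a : ∀ j, A j,
          (∏ j, (∑ b : ∀ k, A k, if b j = a j then π s b else 0)) *
          ((∑ j ∈ Finset.univ.filter (fun j => E i j), rp i j s (a i) (a j)) +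
            γ * ∑ s', P s a s' * Vhat s')) →
        -- W : player i's value when deviating to μ against π̂_{-i}
        (∀ s, W s = ∑ a : ∀ j, A j,
          (μ s (a i) * ∏ j ∈ Finset.univ.erase i,
            (∑ b : ∀ k, A k, if b j = a j then π s b else 0)) *
          ((∑ j ∈ Finset.univ.filter (fun j => E i j), rp i j s (a i) (a j)) +
            γ * ∑ s', P s a s' * W s')) →
        ∀ s, W s - Vhat s ≤ ((Fintype.card N : ℝ) + 1) * ε / (1 - γ) :=
  zeroSum_NMG_CCE_to_NE_general A E hirr rp γ ε hγ0 hγ1 hε hzs P hPnn hPsum hPdec π hπnn hπsum V hV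
    hCCE
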